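/- arXiv:1011.5056 — 5 statements merged into one kernel-verified Lean document; each statement's English description precedes it below -/
import Mathlib

section
/- If m is a state of a group G, then for all g, h ∈ G, |m(g) - m(h)| ≤ √(2 · Re(1 - m(g⁻¹h))) (Kreĭn's inequality). -/
open scoped ComplexConjugate ComplexOrder

/-!
Positivity of the quadratic form on the two points `1, g` with weights `1, z`, for `z = 0, 1, i`,
forces `m 1` to be real and `m g⁻¹ = conj (m g)`. On the three points `1, g, h` with weights
`δ, -1, 1`, where `δ = m g - m h`, the quadratic form of a state then equals
`2 Re (1 - m (g⁻¹ h)) - |δ|²`.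
-/

def IsPositiveDefinite {G : Type*} [Group G] (m : G → ℂ) : Prop :=
  ∀ c : G →₀ ℂ, 0 ≤ ∑ g ∈ c.support, ∑ h ∈ c.support, conj (c g) * c h * m (g⁻¹ * h)

namespace IsPositiveDefinite

variable {G : Type*} [Group G] {m : G → ℂ}

theorem sum_sum_conj_mul_nonneg (hm : IsPositiveDefinite m) {ι : Type*} (s : Finset ι)
    (p : ι → G) (v : ι → ℂ) : 0 ≤ ∑ i ∈ s, ∑ j ∈ s, conj (v i) * v j * m ((p i)⁻¹ * p j) := by
  classical
  have sum_index : ∀ F : G → ℂ → ℂ, (∀ g, F g 0 = 0) → (∀ g a b, F g (a + b) = F g a + F g b) →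
      (∑ i ∈ s, Finsupp.single (p i) (v i)).sum F = ∑ i ∈ s, F (p i) (v i) := fun F h0 hadd => by
    rw [← Finsupp.sum_finsetSum_index h0 hadd]
    exact Finset.sum_congr rfl fun i _ => Finsupp.sum_single_index (h0 _)
  convert hm (∑ i ∈ s, Finsupp.single (p i) (v i)) using 1
  change _ = Finsupp.sum _ fun g a => Finsupp.sum _ fun h b => conj a * b * m (g⁻¹ * h)
  rw [sum_index]
  · refine Finset.sum_congr rfl fun i _ => ?_
    rw [sum_index] <;> intros <;> ring
  · simp
  · intros
    rw [← Finsupp.sum_add]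
    congr with h b
    rw [map_add]
    ring

theorem quadForm_pair_nonneg (hm : IsPositiveDefinite m) (g : G) (z : ℂ) :
    0 ≤ (1 + conj z * z) * m 1 + z * m g + conj z * m g⁻¹ := by
  have h := hm.sum_sum_conj_mul_nonneg Finset.univ ![1, g] ![1, z]
  simp only [Fin.sum_univ_two, Matrix.cons_val_zero, Matrix.cons_val_one, inv_one, one_mul,
    mul_one, inv_mul_cancel, map_one] at h
  exact h.trans_eq (by ring)

theorem map_inv (hm : IsPositiveDefinite m) (g : G) : m g⁻¹ = conj (m g) := by
  have im_eq_zero := fun z => (Complex.nonneg_iff.mp (hm.quadForm_pair_nonneg g z)).2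
  have h0 := im_eq_zero 0
  have h1 := im_eq_zero 1
  have hI := im_eq_zero Complex.I
  simp only [map_zero, mul_zero, add_zero, one_mul, zero_mul, map_one, mul_one, Complex.add_im,
    Complex.mul_im, Complex.add_re, Complex.one_re, Complex.one_im, Complex.conj_I, neg_mul,
    Complex.I_mul_I, neg_neg, Complex.I_re, Complex.I_im, zero_add, Complex.neg_im] at h0 h1 hI
  apply Complex.ext
  · rw [Complex.conj_re]; linarith
  · rw [Complex.conj_im]; linarith

theorem norm_sub_sq_le (hm : IsPositiveDefinite m) (hone : m 1 = 1) (g h : G) :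
    ‖m g - m h‖ ^ 2 ≤ 2 * (1 - m (g⁻¹ * h)).re := by
  have H := hm.sum_sum_conj_mul_nonneg Finset.univ ![1, g, h] ![m g - m h, -1, 1]
  have hhg : h⁻¹ * g = (g⁻¹ * h)⁻¹ := by group
  simp only [Fin.sum_univ_three, Matrix.cons_val_zero, Matrix.cons_val_one, Matrix.cons_val_two,
    Matrix.head_cons, Matrix.tail_cons, inv_one, one_mul, mul_one, inv_mul_cancel, hone, hhg,
    hm.map_inv, map_one, map_neg, map_sub] at H
  have hδ := Complex.conj_mul' (m g - m h)
  have hc := Complex.add_conj (m (g⁻¹ * h))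
  rw [map_sub] at hδ
  have form_eq : 0 ≤ ((2 - 2 * (m (g⁻¹ * h)).re - ‖m g - m h‖ ^ 2 : ℝ) : ℂ) := by
    push_cast at hc ⊢
    exact H.trans_eq (by linear_combination (-1 : ℂ) * hδ - hc)
  rw [Complex.sub_re, Complex.one_re]
  linarith [Complex.zero_le_real.mp form_eq]

end IsPositiveDefinite

/-- **Kreĭn's inequality.** If `m` is a state of a group `G`, then for all `g h`,
`|m g - m h| ≤ √(2 · Re (1 - m (g⁻¹ h)))`. -/
theorem krein_inequality {G : Type*} [Group G] (m : G → ℂ)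
    (hone : m 1 = 1)
    (hpos : ∀ c : G →₀ ℂ,
      0 ≤ ∑ g ∈ c.support, ∑ h ∈ c.support, conj (c g) * c h * m (g⁻¹ * h)) :
    ∀ g h : G, ‖m g - m h‖ ≤ Real.sqrt (2 * (1 - m (g⁻¹ * h)).re) := by
  have hm : IsPositiveDefinite m := hpos
  intro g h
  exact Real.le_sqrt_of_sq_le (hm.norm_sub_sq_le hone g h)
end

section
/- If m is a state of a group G, then the set H = {h ∈ G : m(h) = 1} is a subgroup of G, and m is constant on each left coset of H: m(gh) = m(g) for all g ∈ G and h ∈ H. -/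
open scoped ComplexConjugate ComplexOrder

lemma pos_fun' {G : Type*} [Group G] (m : G → ℂ)
    (hpos : ∀ c : G →₀ ℂ,
      0 ≤ ∑ g ∈ c.support, ∑ h ∈ c.support, conj (c g) * c h * m (g⁻¹ * h))
    (s : Finset G) (f : G → ℂ) (hf : ∀ g, f g ≠ 0 → g ∈ s) :
    0 ≤ ∑ g ∈ s, ∑ h ∈ s, conj (f g) * f h * m (g⁻¹ * h) := by
  set c : G →₀ ℂ := Finsupp.onFinset s f hf with hc
  have hsub : c.support ⊆ s := Finsupp.support_onFinset_subset
  have key := hpos c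
  have inner : ∀ g : G, ∑ h ∈ c.support, conj (c g) * c h * m (g⁻¹ * h)
      = ∑ h ∈ s, conj (c g) * c h * m (g⁻¹ * h) := by
    intro g
    refine Finset.sum_subset hsub fun h _ hh => ?_
    have : c h = 0 := Finsupp.notMem_support_iff.mp hh
    simp [this]
  have outer : ∑ g ∈ c.support, ∑ h ∈ s, conj (c g) * c h * m (g⁻¹ * h)
      = ∑ g ∈ s, ∑ h ∈ s, conj (c g) * c h * m (g⁻¹ * h) := by
    refine Finset.sum_subset hsub fun g _ hg => ?_
    have : c g = 0 := Finsupp.notMem_support_iff.mp hg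
    simp [this]
  simp only [inner] at key
  rw [outer] at key
  exact key

lemma mconj {G : Type*} [Group G] (m : G → ℂ) (hone : m 1 = 1)
    (hpos : ∀ c : G →₀ ℂ,
      0 ≤ ∑ g ∈ c.support, ∑ h ∈ c.support, conj (c g) * c h * m (g⁻¹ * h))
    (x : G) : m x⁻¹ = conj (m x) := by
  classical
  by_cases hx : x = 1
  · simp [hx, hone]
  · have h1 : (1:G) ∉ ({x} : Finset G) := by simp [Ne.symm hx]
    have q := fun (a b : ℂ) => pos_fun' m hpos (insert 1 {x})
      (fun y => if y = 1 then a else if y = x then b else 0)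
      (by intro g hg; by_cases h : g = 1 <;> by_cases h' : g = x <;> simp [h, h'] at hg ⊢)
    simp only [Finset.sum_insert h1, Finset.sum_singleton, if_pos rfl, if_neg hx,
      if_neg (Ne.symm hx)] at q
    simp only [if_pos rfl, inv_one, one_mul, mul_one, hone, inv_mul_cancel] at q
    -- inspect q
    have q1 := q 1 1
    have q2 := q 1 Complex.I
    simp at q1 q2
    rw [Complex.le_def] at q1 q2
    simp [Complex.add_im, Complex.mul_im, Complex.ext_iff] at q1 q2 ⊢
    constructor <;> linarith [q1.2, q2.2]


lemma mkey {G : Type*} [Group G] (m : G → ℂ) (hone : m 1 = 1)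
    (hpos : ∀ c : G →₀ ℂ,
      0 ≤ ∑ g ∈ c.support, ∑ h ∈ c.support, conj (c g) * c h * m (g⁻¹ * h))
    (g h : G) (hh : m h = 1) : m (g * h) = m g := by
  classical
  have hhinv : m h⁻¹ = 1 := by rw [mconj m hone hpos, hh, map_one]
  by_cases hh1 : h = 1
  · simp [hh1]
  by_cases hg1 : g = 1
  · simp [hg1, hh, hone]
  by_cases hgh : g⁻¹ = h
  · have : g = h⁻¹ := by rw [← hgh, inv_inv]
    rw [this, inv_mul_cancel, hone, hhinv]
  have d1 : (g⁻¹ : G) ≠ 1 := by simpa using hg1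
  have hmem : g⁻¹ ∉ (insert 1 {h} : Finset G) := by simp [d1, hgh]
  have hmem2 : (1:G) ∉ ({h} : Finset G) := by simp [Ne.symm hh1]
  set d : ℂ := m g - m (g * h) with hd
  have q := pos_fun' m hpos (insert g⁻¹ (insert 1 {h}))
    (fun y => if y = g⁻¹ then d else if y = 1 then -1 else if y = h then 1 else 0)
    (by intro y hy
        by_cases e1 : y = g⁻¹ <;> by_cases e2 : y = 1 <;> by_cases e3 : y = h <;>
          simp [e1, e2, e3] at hy ⊢)
  simp only [Finset.sum_insert hmem, Finset.sum_insert hmem2, Finset.sum_singleton] at q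
  have n1 : (1:G) ≠ g⁻¹ := Ne.symm d1
  have n2 : h ≠ g⁻¹ := Ne.symm hgh
  have n3 : h ≠ 1 := hh1
  simp only [if_pos rfl, if_neg d1, if_neg hgh, if_neg n1, if_neg n2, if_neg n3] at q
  have e1 : m (h⁻¹ * g⁻¹) = conj (m (g * h)) := by
    rw [← mul_inv_rev, mconj m hone hpos]
  simp only [if_true, inv_inv, mul_inv_cancel, inv_mul_cancel, mul_one, one_mul, inv_one,
    hone, hh, hhinv, e1, mconj m hone hpos g, map_one, map_neg] at q
  have key2 : (0:ℂ) ≤ -(Complex.normSq d : ℂ) := by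
    rw [← Complex.mul_conj d, mul_comm]
    convert q using 1
    rw [hd, map_sub]
    ring
  rw [Complex.le_def] at key2
  have : Complex.normSq d = 0 := by
    have := key2.1
    simp at this
    linarith [Complex.normSq_nonneg d]
  have hd0 : d = 0 := Complex.normSq_eq_zero.mp this
  rw [hd] at hd0
  linear_combination -hd0


/-- If `m` is a state of a group `G`, then `H = {h | m h = 1}` is a subgroup of `G`,
and `m` is constant on each left coset of `H`: `m (g h) = m g` for all `g ∈ G`, `h ∈ H`. -/
theorem state_level_set_subgroup {G : Type*} [Group G] (m : G → ℂ)
    (hone : m 1 = 1)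
    (hpos : ∀ c : G →₀ ℂ,
      0 ≤ ∑ g ∈ c.support, ∑ h ∈ c.support, conj (c g) * c h * m (g⁻¹ * h)) :
    ∃ H : Subgroup G, (H : Set G) = {h : G | m h = 1} ∧
      ∀ g h : G, h ∈ H → m (g * h) = m g := by
  refine ⟨{ carrier := {h : G | m h = 1}
            one_mem' := hone
            mul_mem' := ?_
            inv_mem' := ?_ }, rfl, ?_⟩
  · intro a b (ha : m a = 1) (hb : m b = 1)
    show m (a * b) = 1
    rw [mkey m hone hpos a b hb, ha]
  · intro a (ha : m a = 1)
    show m a⁻¹ = 1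
    rw [mconj m hone hpos, ha, map_one]
  · intro g h hh
    exact mkey m hone hpos g h hh
end

section
/- Let G be a compact connected Lie group with maximal torus T and Weyl group W. Let λ, μ ∈ t* be dominant integral forms with λ not ≤ μ in the dominance order. Then λ does not lie in the convex hull of the Weyl group orbit W(μ): there exists Z in the closed positive Weyl chamber with ⟨w(μ) - λ, Z⟩ < 0 for all w ∈ W. -/
theorem map_sub_neg_of_map_sub_nonneg {M R F : Type*} [AddCommGroup M] [AddCommGroup R]
    [PartialOrder R] [IsOrderedAddMonoid R] [FunLike F M R] [AddMonoidHomClass F M R]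
    (φ : F) {x y z : M} (hxy : 0 ≤ φ (x - y)) (hxz : φ (x - z) < 0) :
    φ (y - z) < 0 :=
  calc φ (y - z) = φ (x - z) - φ (x - y) := by
        rw [← map_sub, sub_sub_sub_cancel_left]
    _ ≤ φ (x - z) := sub_le_self _ hxy
    _ < 0 := hxz

theorem dominant_not_le_separating_general
    {t : Type*} [AddCommGroup t] [Module ℝ t]
    {tstar : Type*} [AddCommGroup tstar] [Module ℝ tstar]
    {W : Type*}
    (pair : tstar →ₗ[ℝ] t →ₗ[ℝ] ℝ)
    (Cbar : Set t)
    (wact : W → tstar →ₗ[ℝ] tstar)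
    (lam μ : tstar)
    -- `μ` and `λ` are dominant: `w ν ≤ ν` for all `w ∈ W`
    (hμdom : ∀ w : W, ∀ Z ∈ Cbar, 0 ≤ pair (μ - wact w μ) Z)
    -- `λ` is not `≤ μ` in the dominance order
    (hnot : ¬ ∀ Z ∈ Cbar, 0 ≤ pair (μ - lam) Z) :
    ∃ Z ∈ Cbar, ∀ w : W, pair (wact w μ - lam) Z < 0 := by
  push Not at hnot
  obtain ⟨Z, hZ, hμlam⟩ := hnot
  exact ⟨Z, hZ, fun w => map_sub_neg_of_map_sub_nonneg (pair.flip Z) (hμdom w Z hZ) hμlam⟩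

/-- **Separating hyperplane step of Theorem 5.16.** Let `t`, `t*` be the Cartan
subalgebra of a compact connected Lie group and its dual, paired by `pair`, let
`Cbar` be the closed positive Weyl chamber and `W` the (finite) Weyl group acting
on `t*`.  Let `λ`, `μ` be dominant integral forms (dominant: `w ν ≤ ν` for all
`w ∈ W`, where `ν' ≤ ν` iff `ν - ν'` is nonnegative on `Cbar`; integral: belonging
to the weight lattice `Λ`).  If `λ` is not `≤ μ`, then `λ` lies outside the convex
hull of `W μ`: there is `Z` in the closed chamber with `⟨w μ - λ, Z⟩ < 0` for all
`w ∈ W`. -/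
theorem dominant_not_le_separating
    {t : Type*} [AddCommGroup t] [Module ℝ t]
    {tstar : Type*} [AddCommGroup tstar] [Module ℝ tstar]
    {W : Type*} [Group W] [Finite W]
    (pair : tstar →ₗ[ℝ] t →ₗ[ℝ] ℝ)
    (Cbar : Set t)
    (wact : W → tstar →ₗ[ℝ] tstar)
    (Λ : AddSubgroup tstar)
    (lam μ : tstar) (hlamΛ : lam ∈ Λ) (hμΛ : μ ∈ Λ)
    -- `μ` and `λ` are dominant: `w ν ≤ ν` for all `w ∈ W`
    (hμdom : ∀ w : W, ∀ Z ∈ Cbar, 0 ≤ pair (μ - wact w μ) Z)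
    (hlamdom : ∀ w : W, ∀ Z ∈ Cbar, 0 ≤ pair (lam - wact w lam) Z)
    -- `λ` is not `≤ μ` in the dominance order
    (hnot : ¬ ∀ Z ∈ Cbar, 0 ≤ pair (μ - lam) Z) :
    ∃ Z ∈ Cbar, ∀ w : W, pair (wact w μ - lam) Z < 0 :=
  dominant_not_le_separating_general pair Cbar wact lam μ hμdom hnot
end

section
/- Let G be a compact connected Lie group, T a maximal torus, and X a coadjoint orbit of G through a point of t* (identified with the T-fixed points of g*). Then the projection π(X) of X to t* is contained in the convex hull of the Weyl group orbit X ∩ t*, and conversely contains it; i.e., π(X) = conv(W·μ) where μ is the dominant element of X (Kostant convexity theorem). -/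
/-!
Schur's half: if `U A U* = W diag(λ) W*`, the diagonal of `U A U*` is `M λ` with
`M i j = |W i j|²` doubly stochastic, so by Birkhoff it lies in the convex hull of the
permutations of `λ`.

Horn's half: conjugating by a Givens rotation in the `(p, q)`-plane, with a phase chosen to
cancel the off-diagonal cross term, replaces the diagonal `d` by the T-transform
`t d + (1 - t) (d ∘ (p q))`. By Hardy–Littlewood–Pólya, every vector majorized by `λ` (in
particular every point of the convex hull of its permutations) is obtained from `λ` by
finitely many T-transforms: fix the coordinate carrying the largest remaining entry `m` of
the target by a T-transform between the two values of `λ` adjacent to `m`, and recurse on the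
other coordinates.
-/

open Finset Function

section Majorization

variable {ι : Type*}

/-- Majorization on the coordinates `A`, without sorting: the largest of the sums of `y` over
`#B` coordinates is its top-`#B` sum. -/
def MajorizedOn (A : Finset ι) (x y : ι → ℝ) : Prop :=
  ∑ i ∈ A, x i = ∑ i ∈ A, y i ∧
    ∀ B ⊆ A, ∃ C ⊆ A, #C = #B ∧ ∑ i ∈ B, x i ≤ ∑ i ∈ C, y i

lemma sum_le_sum_of_card_eq {f : ι → ℝ} {D F : Finset ι} (h : #D = #F)
    (hle : ∀ d ∈ D, ∀ e ∈ F, f d ≤ f e) : ∑ i ∈ D, f i ≤ ∑ i ∈ F, f i := by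
  have e := Finset.equivOfCardEq h
  calc ∑ i ∈ D, f i = ∑ x : D, f x := (sum_attach D f).symm
    _ ≤ ∑ x : D, f (e x) := sum_le_sum fun x _ => hle x x.2 (e x) (e x).2
    _ = ∑ y : F, f y := e.sum_comp (fun y : F => f y)
    _ = ∑ i ∈ F, f i := sum_attach F f

lemma convex_setOf_majorizedOn (A : Finset ι) (y : ι → ℝ) :
    Convex ℝ {x | MajorizedOn A x y} := by
  rintro x₁ ⟨hsum₁, hB₁⟩ x₂ ⟨hsum₂, hB₂⟩ s t hs ht hst
  have hlin : ∀ B : Finset ι, ∑ i ∈ B, (s • x₁ + t • x₂) i =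
      s * ∑ i ∈ B, x₁ i + t * ∑ i ∈ B, x₂ i := fun B => by
    simp only [Pi.add_apply, Pi.smul_apply, smul_eq_mul, sum_add_distrib, mul_sum]
  refine ⟨by rw [hlin, hsum₁, hsum₂, ← add_mul, hst, one_mul], fun B hB => ?_⟩
  obtain ⟨C₁, hC₁, hc₁, h₁⟩ := hB₁ B hB
  obtain ⟨C₂, hC₂, hc₂, h₂⟩ := hB₂ B hB
  obtain ⟨C, hC, hc, hY₁, hY₂⟩ : ∃ C ⊆ A, #C = #B ∧
      ∑ i ∈ C₁, y i ≤ ∑ i ∈ C, y i ∧ ∑ i ∈ C₂, y i ≤ ∑ i ∈ C, y i := by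
    rcases le_total (∑ i ∈ C₁, y i) (∑ i ∈ C₂, y i) with h | h
    exacts [⟨C₂, hC₂, hc₂, h, le_rfl⟩, ⟨C₁, hC₁, hc₁, le_rfl, h⟩]
  refine ⟨C, hC, hc, ?_⟩
  calc ∑ i ∈ B, (s • x₁ + t • x₂) i = s * ∑ i ∈ B, x₁ i + t * ∑ i ∈ B, x₂ i := hlin B
    _ ≤ s * ∑ i ∈ C, y i + t * ∑ i ∈ C, y i := by gcongr; exacts [h₁.trans hY₁, h₂.trans hY₂]
    _ = ∑ i ∈ C, y i := by rw [← add_mul, hst, one_mul]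

lemma majorizedOn_univ_of_mem_convexHull [Fintype ι] {x y : ι → ℝ}
    (hx : x ∈ convexHull ℝ {z | ∃ σ : Equiv.Perm ι, z = y ∘ σ}) : MajorizedOn univ x y := by
  refine convexHull_min ?_ (convex_setOf_majorizedOn univ y) hx
  rintro _ ⟨σ, rfl⟩
  exact ⟨Equiv.sum_comp σ y, fun B _ =>
    ⟨B.map σ.toEmbedding, subset_univ _, card_map _, by simp [sum_map]⟩⟩

lemma MajorizedOn.exists_adjacent {A : Finset ι} {x y : ι → ℝ} {a : ι}
    (hxy : MajorizedOn A x y) (ha : a ∈ A) (hlow : ∃ j ∈ A, y j < x a) :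
    ∃ p ∈ A, ∃ q ∈ A, y q < x a ∧ x a ≤ y p ∧ ∀ i ∈ A, y i ≤ y q ∨ y p ≤ y i := by
  have hhigh : (A.filter (x a ≤ y ·)).Nonempty := by
    obtain ⟨C, hCA, hC, hle⟩ := hxy.2 {a} (singleton_subset_iff.2 ha)
    obtain ⟨c, rfl⟩ := card_eq_one.1 hC
    exact ⟨c, mem_filter.2 ⟨hCA (mem_singleton_self c), by simpa using hle⟩⟩
  obtain ⟨p, hpP, hpmin⟩ := (A.filter (x a ≤ y ·)).exists_min_image y hhigh
  obtain ⟨q, hqL, hqmax⟩ := (A.filter (y · < x a)).exists_max_image y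
    (let ⟨j, hj, h⟩ := hlow; ⟨j, mem_filter.2 ⟨hj, h⟩⟩)
  rw [mem_filter] at hpP hqL
  refine ⟨p, hpP.1, q, hqL.1, hqL.2, hpP.2, fun i hi => ?_⟩
  rcases lt_or_ge (y i) (x a) with h | h
  · exact .inl (hqmax i (mem_filter.2 ⟨hi, h⟩))
  · exact .inr (hpmin i (mem_filter.2 ⟨hi, h⟩))

variable [DecidableEq ι]

/-- The T-transform `t • I + (1 - t) • (p q)` of Hardy–Littlewood–Pólya. -/
def tTransform (y : ι → ℝ) (p q : ι) (t : ℝ) : ι → ℝ :=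
  t • y + (1 - t) • (y ∘ Equiv.swap p q)

@[simp]
lemma tTransform_zero (y : ι → ℝ) (p q : ι) : tTransform y p q 0 = y ∘ Equiv.swap p q := by
  simp [tTransform]

@[simp]
lemma tTransform_self (y : ι → ℝ) (p : ι) (t : ℝ) : tTransform y p p t = y := by
  ext i; simp [tTransform]; ring

lemma tTransform_apply_left (y : ι → ℝ) (p q : ι) (t : ℝ) :
    tTransform y p q t p = t * y p + (1 - t) * y q := by
  simp [tTransform]

lemma tTransform_apply_right (y : ι → ℝ) (p q : ι) (t : ℝ) :
    tTransform y p q t q = t * y q + (1 - t) * y p := by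
  simp [tTransform]

lemma tTransform_apply_of_ne (y : ι → ℝ) {p q i : ι} (t : ℝ) (hp : i ≠ p) (hq : i ≠ q) :
    tTransform y p q t i = y i := by
  simp [tTransform, Equiv.swap_apply_of_ne_of_ne hp hq]; ring

lemma sum_comp_swap_of_mem (f : ι → ℝ) {p q : ι} {C : Finset ι} (hp : p ∈ C) (hq : q ∈ C) :
    ∑ i ∈ C, f (Equiv.swap p q i) = ∑ i ∈ C, f i :=
  Equiv.Perm.sum_comp _ C f fun i hi => by
    rcases (Equiv.swap_apply_ne_self_iff.1 hi).2 with rfl | rfl <;> assumption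

lemma sum_tTransform_of_mem (y : ι → ℝ) {p q : ι} (t : ℝ) {C : Finset ι} (hp : p ∈ C)
    (hq : q ∈ C) : ∑ i ∈ C, tTransform y p q t i = ∑ i ∈ C, y i := by
  simp only [tTransform, Pi.add_apply, Pi.smul_apply, comp_apply, smul_eq_mul, sum_add_distrib,
    ← mul_sum, sum_comp_swap_of_mem y hp hq]
  ring

lemma sum_tTransform_of_notMem (y : ι → ℝ) {p q : ι} (t : ℝ) {C : Finset ι} (hp : p ∉ C)
    (hq : q ∉ C) : ∑ i ∈ C, tTransform y p q t i = ∑ i ∈ C, y i :=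
  sum_congr rfl fun _ hi => tTransform_apply_of_ne y t (ne_of_mem_of_not_mem hi hp)
    (ne_of_mem_of_not_mem hi hq)

lemma exists_tTransform_apply_left_eq {y : ι → ℝ} {p q : ι} {m : ℝ} (hq : y q < m)
    (hp : m ≤ y p) : ∃ t ∈ Set.Icc (0 : ℝ) 1, tTransform y p q t p = m := by
  have hpq : 0 < y p - y q := by linarith
  refine ⟨(m - y q) / (y p - y q), ⟨by positivity, (div_le_one hpq).2 (by linarith)⟩, ?_⟩
  rw [tTransform_apply_left]
  field_simp
  ring

lemma swap_mem_erase {A : Finset ι} {a p i : ι} (ha : a ∈ A) (hp : p ∈ A) (hi : i ∈ A.erase p) :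
    Equiv.swap a p i ∈ A.erase a := by
  obtain ⟨hip, hiA⟩ := mem_erase.1 hi
  refine mem_erase.2 ⟨fun h => hip ?_, ?_⟩
  · simpa using congrArg (Equiv.swap a p) h
  · rcases eq_or_ne i a with rfl | hia
    · simpa
    · rwa [Equiv.swap_apply_of_ne_of_ne hia hip]

lemma exists_subset_card_eq_sum_le_of_dominates {y : ι → ℝ} {A Q C : Finset ι}
    (hdom : ∀ i ∈ Q, ∀ j ∈ A \ Q, y j ≤ y i) (hCA : C ⊆ A) (hC : #C ≤ #Q) :
    ∃ C' ⊆ Q, #C' = #C ∧ ∑ i ∈ C, y i ≤ ∑ i ∈ C', y i := by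
  have hcard : #(C \ Q) ≤ #(Q \ C) := by
    have := card_sdiff_add_card_inter C Q
    have := card_sdiff_add_card_inter Q C
    rw [inter_comm] at this; omega
  obtain ⟨F, hFQ, hF⟩ := exists_subset_card_eq hcard
  have hdisj : Disjoint (C ∩ Q) F :=
    disjoint_left.2 fun a ha haF => (mem_sdiff.1 (hFQ haF)).2 (mem_of_mem_inter_left ha)
  refine ⟨(C ∩ Q) ∪ F, union_subset inter_subset_right (hFQ.trans sdiff_subset), ?_, ?_⟩
  · rw [card_union_of_disjoint hdisj, hF, ← card_sdiff_add_card_inter C Q, add_comm]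
  · rw [sum_union hdisj, ← sum_inter_add_sum_sdiff C Q y]
    refine add_le_add_right (sum_le_sum_of_card_eq hF.symm ?_) _
    exact fun d hd e he =>
      hdom e (sdiff_subset (hFQ he)) d (sdiff_subset_sdiff hCA subset_rfl hd)

lemma exists_superset_card_eq_sum_le_of_dominates {y : ι → ℝ} {A Q C : Finset ι}
    (hdom : ∀ i ∈ Q, ∀ j ∈ A \ Q, y j ≤ y i) (hCA : C ⊆ A) (hQA : Q ⊆ A) (hC : #Q ≤ #C) :
    ∃ C' ⊆ A, Q ⊆ C' ∧ #C' = #C ∧ ∑ i ∈ C, y i ≤ ∑ i ∈ C', y i := by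
  have hcard : #(Q \ C) ≤ #(C \ Q) := by
    have := card_sdiff_add_card_inter C Q
    have := card_sdiff_add_card_inter Q C
    rw [inter_comm] at this; omega
  obtain ⟨F, hFC, hF⟩ := exists_subset_card_eq hcard
  have hdisj : Disjoint (C \ F) (Q \ C) :=
    disjoint_left.2 fun a ha haQ => (mem_sdiff.1 haQ).2 (mem_sdiff.1 ha).1
  refine ⟨(C \ F) ∪ (Q \ C), union_subset (sdiff_subset.trans hCA) (sdiff_subset.trans hQA),
    fun i hi => ?_, ?_, ?_⟩
  · by_cases hiC : i ∈ C
    · exact mem_union_left _ (mem_sdiff.2 ⟨hiC, fun hiF => (mem_sdiff.1 (hFC hiF)).2 hi⟩)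
    · exact mem_union_right _ (mem_sdiff.2 ⟨hi, hiC⟩)
  · rw [card_union_of_disjoint hdisj, card_sdiff_of_subset (hFC.trans sdiff_subset), hF]
    have := card_le_card (hFC.trans sdiff_subset)
    omega
  · rw [sum_union hdisj, ← sum_sdiff (hFC.trans sdiff_subset)]
    refine add_le_add_right (sum_le_sum_of_card_eq hF ?_) _
    exact fun d hd e he =>
      hdom e (sdiff_subset he) d (sdiff_subset_sdiff hCA subset_rfl (hFC hd))

lemma dominates_erase_filter_le {A : Finset ι} {y : ι → ℝ} (p : ι) :
    ∀ i ∈ (A.filter (y p ≤ y ·)).erase p, ∀ j ∈ A \ (A.filter (y p ≤ y ·)).erase p,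
      y j ≤ y i := by
  intro i hi j hj
  have hpi : y p ≤ y i := (mem_filter.1 (mem_of_mem_erase hi)).2
  by_contra! hij
  exact (mem_sdiff.1 hj).2 (mem_erase.2 ⟨by rintro rfl; linarith,
    mem_filter.2 ⟨(mem_sdiff.1 hj).1, by linarith⟩⟩)

lemma dominates_insert_filter_le {A : Finset ι} {y : ι → ℝ} {p q : ι} (hqp : y q < y p)
    (hgap : ∀ i ∈ A, y i ≤ y q ∨ y p ≤ y i) :
    ∀ i ∈ insert q (A.filter (y p ≤ y ·)), ∀ j ∈ A \ insert q (A.filter (y p ≤ y ·)),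
      y j ≤ y i := by
  intro i hi j hj
  obtain ⟨hjA, hjqP⟩ := mem_sdiff.1 hj
  have hqi : y q ≤ y i := by
    rcases mem_insert.1 hi with rfl | hiP
    · exact le_rfl
    · linarith [(mem_filter.1 hiP).2]
  rcases hgap j hjA with h | h
  · exact h.trans hqi
  · exact absurd (mem_insert_of_mem (mem_filter.2 ⟨hjA, h⟩)) hjqP

section Step

variable {A : Finset ι} {x y : ι → ℝ} {a p q : ι} {t : ℝ}

/-- The heart of the Hardy–Littlewood–Pólya argument: the values of `y` on `A` split at the
adjacent pair `y q < y p`, so every top-`k` partial sum can be taken either inside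
`{y ≥ y p} \ {p}` or containing `{y ≥ y p} ∪ {q}`, and the T-transform changes neither kind
beyond moving `x a` into position `p`. -/
lemma MajorizedOn.exists_erase_sum_le_tTransform (hxy : MajorizedOn A x y) (ha : a ∈ A)
    (hp : p ∈ A) (hq : q ∈ A) (hqp : y q < y p) (hgap : ∀ i ∈ A, y i ≤ y q ∨ y p ≤ y i)
    (hu : tTransform y p q t p = x a) {B : Finset ι} (hB : B ⊆ A.erase a) :
    ∃ C ⊆ A.erase p, #C = #B ∧ ∑ i ∈ B, x i ≤ ∑ i ∈ C, tTransform y p q t i := by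
  set P := A.filter (y p ≤ y ·)
  have hpP : p ∈ P := mem_filter.2 ⟨hp, le_rfl⟩
  by_cases hk : #B ≤ #(P.erase p)
  · obtain ⟨C, hCA, hC, hBC⟩ := hxy.2 B (hB.trans (erase_subset a A))
    obtain ⟨C', hC'P, hC', hCC'⟩ :=
      exists_subset_card_eq_sum_le_of_dominates (dominates_erase_filter_le p) hCA (hC ▸ hk)
    have hpC' : p ∉ C' := fun h => by simpa using hC'P h
    have hqC' : q ∉ C' := fun h => by
      have := (mem_filter.1 (mem_of_mem_erase (hC'P h))).2
      linarith
    refine ⟨C', hC'P.trans (erase_subset_erase p (filter_subset _ A)), hC'.trans hC, ?_⟩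
    rw [sum_tTransform_of_notMem y t hpC' hqC']
    exact hBC.trans hCC'
  · have haB : a ∉ B := fun h => by simpa using hB h
    obtain ⟨C, hCA, hC, hBC⟩ := hxy.2 (insert a B) (insert_subset ha (hB.trans (erase_subset a A)))
    obtain ⟨C', hC'A, hPC', hC', hCC'⟩ := exists_superset_card_eq_sum_le_of_dominates
      (Q := insert q P) (dominates_insert_filter_le hqp hgap) hCA
      (insert_subset hq (filter_subset _ A)) (by
        rw [hC, card_insert_of_notMem haB]
        have := card_insert_le q P
        have := card_erase_of_mem hpP
        omega)
    have hpC' : p ∈ C' := hPC' (mem_insert_of_mem hpP)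
    refine ⟨C'.erase p, erase_subset_erase p hC'A, ?_, ?_⟩
    · rw [card_erase_of_mem hpC', hC', hC, card_insert_of_notMem haB]; rfl
    · have := sum_erase_add C' (tTransform y p q t) hpC'
      rw [sum_tTransform_of_mem y t hpC' (hPC' (mem_insert_self q P)), hu] at this
      rw [sum_insert haB] at hBC
      linarith

lemma MajorizedOn.erase_comp_swap_tTransform (hxy : MajorizedOn A x y) (ha : a ∈ A)
    (hp : p ∈ A) (hq : q ∈ A) (hqp : y q < y p) (hgap : ∀ i ∈ A, y i ≤ y q ∨ y p ≤ y i)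
    (hu : tTransform y p q t p = x a) :
    MajorizedOn (A.erase p) (x ∘ Equiv.swap a p) (tTransform y p q t) := by
  constructor
  · have hx := sum_erase_add A (x ∘ Equiv.swap a p) hp
    have hu' := sum_erase_add A (tTransform y p q t) hp
    rw [sum_tTransform_of_mem y t hp hq, hu] at hu'
    simp only [comp_apply, Equiv.swap_apply_right, sum_comp_swap_of_mem x ha hp] at hx
    simp only [comp_apply]
    linarith [hxy.1]
  · intro B hB
    obtain ⟨C, hC, hCB, hle⟩ := hxy.exists_erase_sum_le_tTransform ha hp hq hqp hgap hu
      (B := B.map (Equiv.swap a p).toEmbedding)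
      (fun j hj => by
        obtain ⟨i, hi, rfl⟩ := mem_map.1 hj
        exact swap_mem_erase ha hp (hB hi))
    exact ⟨C, hC, by simpa using hCB, by simpa [sum_map] using hle⟩

end Step

theorem mem_of_majorizedOn {S : Set (ι → ℝ)}
    (hS : ∀ y ∈ S, ∀ p q : ι, ∀ t ∈ Set.Icc (0 : ℝ) 1, tTransform y p q t ∈ S)
    (A : Finset ι) {x y : ι → ℝ} (hy : y ∈ S) (hxy : MajorizedOn A x y)
    (hout : ∀ i ∉ A, x i = y i) : x ∈ S := by
  induction A using Finset.strongInduction generalizing x y with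
  | _ A ih =>
  rcases A.eq_empty_or_nonempty with rfl | hA
  · rwa [funext fun i => hout i (notMem_empty i)]
  obtain ⟨a, ha, hamax⟩ := A.exists_max_image x hA
  by_cases hlow : ∃ j ∈ A, y j < x a
  · obtain ⟨p, hp, q, hq, hqa, hap, hgap⟩ := hxy.exists_adjacent ha hlow
    obtain ⟨t, ht, hu⟩ := exists_tTransform_apply_left_eq hqa hap
    have hx' : x ∘ Equiv.swap a p ∈ S := by
      refine ih _ (erase_ssubset hp) (hS y hy p q t ht)
        (hxy.erase_comp_swap_tTransform ha hp hq (hqa.trans_le hap) hgap hu) fun i hi => ?_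
      rcases eq_or_ne i p with rfl | hip
      · simpa using hu.symm
      have hiA : i ∉ A := fun h => hi (mem_erase.2 ⟨hip, h⟩)
      have hia : i ≠ a := fun h => hiA (h ▸ ha)
      rw [comp_apply, Equiv.swap_apply_of_ne_of_ne hia hip, hout i hiA,
        tTransform_apply_of_ne y t hip fun h => hiA (h ▸ hq)]
    have hswap₂ : (x ∘ Equiv.swap a p) ∘ Equiv.swap a p = x := funext fun i => by simp
    simpa [hswap₂] using hS _ hx' a p 0 ⟨le_rfl, zero_le_one⟩
  · push Not at hlow
    have hle : ∀ i ∈ A, x i ≤ y i := fun i hi => (hamax i hi).trans (hlow i hi)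
    have hAeq := (sum_eq_sum_iff_of_le hle).1 hxy.1
    rwa [funext fun i => if hi : i ∈ A then hAeq i hi else hout i hi]

end Majorization

section UnitaryOrbit

open Matrix

lemma Complex.exists_norm_eq_one_re_star_mul_eq_zero (w : ℂ) :
    ∃ z : ℂ, ‖z‖ = 1 ∧ (star z * w).re = 0 := by
  rcases eq_or_ne w 0 with rfl | hw
  · exact ⟨1, by simp, by simp⟩
  · refine ⟨Complex.I * w / ‖w‖, by simp [hw], ?_⟩
    rw [star_div₀, star_mul', Complex.star_def, Complex.conj_I, div_mul_eq_mul_div, mul_assoc,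
      Complex.conj_mul']
    simp [← Complex.ofReal_pow, Complex.div_re]

variable {n : Type*}

lemma mul_mul_star_apply_self [Fintype n] (R M : Matrix n n ℂ) (i : n) :
    (R * M * star R) i i = (R i ᵥ* M) ⬝ᵥ star (R i) := by
  simp [mul_apply, dotProduct, vecMul, star_apply, sum_mul]

variable [DecidableEq n]

def givensRotation (p q : n) (c s : ℝ) (z : ℂ) : Matrix n n ℂ :=
  of fun i => if i = p then (c : ℂ) • Pi.single p 1 + ((s : ℂ) * z) • Pi.single q 1
    else if i = q then (-((s : ℂ) * star z)) • Pi.single p 1 + (c : ℂ) • Pi.single q 1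
    else Pi.single i 1

section
variable {p q : n} (c s : ℝ) (z : ℂ)

lemma givensRotation_apply_left :
    givensRotation p q c s z p = (c : ℂ) • Pi.single p 1 + ((s : ℂ) * z) • Pi.single q 1 :=
  if_pos rfl

lemma givensRotation_apply_right (hpq : p ≠ q) : givensRotation p q c s z q =
    (-((s : ℂ) * star z)) • Pi.single p 1 + (c : ℂ) • Pi.single q 1 :=
  (if_neg hpq.symm).trans (if_pos rfl)

lemma givensRotation_apply_of_ne {i : n} (hp : i ≠ p) (hq : i ≠ q) :
    givensRotation p q c s z i = Pi.single i 1 :=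
  (if_neg hp).trans (if_neg hq)
end

section
variable [Fintype n] {p q : n} (c s : ℝ) {z : ℂ}

lemma givensRotation_mem_unitaryGroup (hpq : p ≠ q) (hcs : c ^ 2 + s ^ 2 = 1) (hz : ‖z‖ = 1) :
    givensRotation p q c s z ∈ unitaryGroup n ℂ := by
  have hz' : z * (starRingEnd ℂ) z = 1 := by rw [Complex.mul_conj', hz]; simp
  have hcs' : (c : ℂ) ^ 2 + (s : ℂ) ^ 2 = 1 := by exact_mod_cast hcs
  rw [mem_unitaryGroup_iff]
  ext i k
  rw [mul_apply]
  change givensRotation p q c s z i ⬝ᵥ star (givensRotation p q c s z k) = (1 : Matrix n n ℂ) i k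
  have hcases : ∀ i, i = p ∨ i = q ∨ i ≠ p ∧ i ≠ q := by tauto
  rcases hcases i with rfl | rfl | ⟨hip, hiq⟩ <;> rcases hcases k with rfl | rfl | ⟨hkp, hkq⟩ <;>
    simp [givensRotation_apply_left, givensRotation_apply_right, givensRotation_apply_of_ne,
      hpq.symm, dotProduct_add, Pi.single_apply, one_apply, star_smul, *] <;>
    first | ring1 | linear_combination hcs' + (s : ℂ) ^ 2 * hz' | grind

lemma givensRotation_conj_apply_left (hz : ‖z‖ = 1) (B : Matrix n n ℂ) :
    (givensRotation p q c s z * B * star (givensRotation p q c s z)) p p =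
      c ^ 2 * B p p + s ^ 2 * B q q + c * s * (star z * B p q + z * B q p) := by
  have hz' : z * (starRingEnd ℂ) z = 1 := by rw [Complex.mul_conj', hz]; simp
  rw [mul_mul_star_apply_self, givensRotation_apply_left]
  simp [add_vecMul, smul_vecMul, dotProduct_add, star_smul]
  linear_combination (s : ℂ) ^ 2 * B q q * hz'

lemma givensRotation_conj_apply_right (hpq : p ≠ q) (hz : ‖z‖ = 1) (B : Matrix n n ℂ) :
    (givensRotation p q c s z * B * star (givensRotation p q c s z)) q q =
      s ^ 2 * B p p + c ^ 2 * B q q - c * s * (star z * B p q + z * B q p) := by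
  have hz' : z * (starRingEnd ℂ) z = 1 := by rw [Complex.mul_conj', hz]; simp
  rw [mul_mul_star_apply_self, givensRotation_apply_right c s z hpq]
  simp [add_vecMul, smul_vecMul, neg_vecMul, dotProduct_add, star_smul]
  linear_combination (s : ℂ) ^ 2 * B p p * hz'

lemma givensRotation_conj_apply_of_ne {i : n} (hp : i ≠ p) (hq : i ≠ q) (B : Matrix n n ℂ) :
    (givensRotation p q c s z * B * star (givensRotation p q c s z)) i i = B i i := by
  rw [mul_mul_star_apply_self, givensRotation_apply_of_ne c s z hp hq]
  simp
end

variable [Fintype n]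

/-- `π(X)` for the coadjoint orbit `X` of `A`. -/
def unitaryOrbitDiag (A : Matrix n n ℂ) : Set (n → ℝ) :=
  {d | ∃ U ∈ unitaryGroup n ℂ, ∀ i, d i = ((U * A * star U) i i).re}

lemma diag_mem_unitaryOrbitDiag (A : Matrix n n ℂ) : (fun i => (A i i).re) ∈ unitaryOrbitDiag A :=
  ⟨1, one_mem _, by simp⟩

lemma unitaryOrbitDiag_conj_subset {A U : Matrix n n ℂ} (hU : U ∈ unitaryGroup n ℂ) :
    unitaryOrbitDiag (U * A * star U) ⊆ unitaryOrbitDiag A := by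
  rintro d ⟨V, hV, hd⟩
  refine ⟨V * U, mul_mem hV hU, fun i => ?_⟩
  rw [hd, star_mul]
  simp only [Matrix.mul_assoc]

lemma tTransform_diag_mem_unitaryOrbitDiag {B : Matrix n n ℂ} (hB : B.IsHermitian) (p q : n)
    {t : ℝ} (ht : t ∈ Set.Icc (0 : ℝ) 1) :
    tTransform (fun i => (B i i).re) p q t ∈ unitaryOrbitDiag B := by
  rcases eq_or_ne p q with rfl | hpq
  · simpa using diag_mem_unitaryOrbitDiag B
  obtain ⟨z, hz, hphase⟩ := Complex.exists_norm_eq_one_re_star_mul_eq_zero (B p q)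
  have hcross : (star z * B p q + z * B q p).re = 0 := by
    have hconj : z * B q p = star (star z * B p q) := by
      rw [← hB.apply q p, star_mul', star_star, mul_comm]
    rw [hconj, Complex.add_re, Complex.star_def, Complex.conj_re, ← Complex.star_def, hphase,
      add_zero]
  have hc : √t ^ 2 = t := Real.sq_sqrt ht.1
  have hs : √(1 - t) ^ 2 = 1 - t := Real.sq_sqrt (by linarith [ht.2])
  refine ⟨givensRotation p q √t √(1 - t) z,
    givensRotation_mem_unitaryGroup _ _ hpq (by rw [hc, hs]; ring) hz, fun i => ?_⟩
  rcases eq_or_ne i p with rfl | hip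
  · rw [tTransform_apply_left, givensRotation_conj_apply_left _ _ hz]
    simp only [Complex.add_re, ← Complex.ofReal_pow, ← Complex.ofReal_mul, Complex.re_ofReal_mul,
      hcross, hc, hs]
    ring
  rcases eq_or_ne i q with rfl | hiq
  · rw [tTransform_apply_right, givensRotation_conj_apply_right _ _ hpq hz]
    simp only [Complex.add_re, Complex.sub_re, ← Complex.ofReal_pow, ← Complex.ofReal_mul,
      Complex.re_ofReal_mul, hcross, hc, hs]
    ring
  · rw [tTransform_apply_of_ne _ _ hip hiq, givensRotation_conj_apply_of_ne _ _ hip hiq]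

lemma tTransform_mem_unitaryOrbitDiag {A : Matrix n n ℂ} (hA : A.IsHermitian) {d : n → ℝ}
    (hd : d ∈ unitaryOrbitDiag A) (p q : n) (t : ℝ) (ht : t ∈ Set.Icc (0 : ℝ) 1) :
    tTransform d p q t ∈ unitaryOrbitDiag A := by
  obtain ⟨U, hU, hdU⟩ := hd
  have hB : (U * A * star U).IsHermitian := by
    simpa [star_eq_conjTranspose] using isHermitian_mul_mul_conjTranspose U hA
  rw [funext hdU]
  exact unitaryOrbitDiag_conj_subset hU (tTransform_diag_mem_unitaryOrbitDiag hB p q ht)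

lemma normSq_mem_doublyStochastic {U : Matrix n n ℂ} (hU : U ∈ unitaryGroup n ℂ) :
    of (fun i j => Complex.normSq (U i j)) ∈ doublyStochastic ℝ n := by
  refine mem_doublyStochastic_iff_sum.2
    ⟨fun i j => Complex.normSq_nonneg _, fun i => ?_, fun j => ?_⟩
  · have h := congrArg (fun M : Matrix n n ℂ => (M i i).re) (mem_unitaryGroup_iff.1 hU)
    simpa [mul_apply, Complex.mul_conj, Complex.re_sum] using h
  · have h := congrArg (fun M : Matrix n n ℂ => (M j j).re) (mem_unitaryGroup_iff'.1 hU)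
    simpa [mul_apply, Complex.conj_mul', Complex.re_sum, Complex.normSq_eq_norm_sq,
      ← Complex.ofReal_pow] using h

lemma re_conj_diagonal_apply (U : Matrix n n ℂ) (v : n → ℝ) (i : n) :
    ((U * diagonal (fun j => (v j : ℂ)) * star U) i i).re = ∑ j, Complex.normSq (U i j) * v j := by
  rw [mul_apply, Complex.re_sum]
  simp only [mul_diagonal, star_apply]
  refine sum_congr rfl fun j _ => ?_
  rw [mul_right_comm, Complex.star_def, Complex.mul_conj, ← Complex.ofReal_mul, Complex.ofReal_re]

lemma mulVec_mem_convexHull_of_mem_doublyStochastic {M : Matrix n n ℝ}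
    (hM : M ∈ doublyStochastic ℝ n) (v : n → ℝ) :
    M *ᵥ v ∈ convexHull ℝ {x | ∃ σ : Equiv.Perm n, x = v ∘ σ} := by
  have hlin : IsLinearMap ℝ fun N : Matrix n n ℝ => N *ᵥ v :=
    ⟨fun N N' => add_mulVec N N' v, fun c N => smul_mulVec c N v⟩
  rw [← SetLike.mem_coe, doublyStochastic_eq_convexHull_permMatrix] at hM
  have himage : (· *ᵥ v) '' {P | ∃ σ : Equiv.Perm n, σ.permMatrix ℝ = P} =
      {x | ∃ σ : Equiv.Perm n, x = v ∘ σ} := by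
    ext x; simp [permMatrix_mulVec, eq_comm]
  rw [← himage, ← hlin.image_convexHull]
  exact Set.mem_image_of_mem _ hM

theorem unitaryOrbitDiag_diagonal (v : n → ℝ) :
    unitaryOrbitDiag (diagonal fun j => (v j : ℂ)) =
      convexHull ℝ {x | ∃ σ : Equiv.Perm n, x = v ∘ σ} := by
  refine subset_antisymm ?_ fun x hx => ?_
  · rintro d ⟨U, hU, hd⟩
    have hdM : d = of (fun i j => Complex.normSq (U i j)) *ᵥ v :=
      funext fun i => by rw [hd, re_conj_diagonal_apply]; rfl
    exact hdM ▸ mulVec_mem_convexHull_of_mem_doublyStochastic (normSq_mem_doublyStochastic hU) v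
  · have hv : v ∈ unitaryOrbitDiag (diagonal fun j => (v j : ℂ)) := by
      simpa using diag_mem_unitaryOrbitDiag (diagonal fun j => (v j : ℂ))
    exact mem_of_majorizedOn
      (fun _ hy p q t ht => tTransform_mem_unitaryOrbitDiag
        (isHermitian_diagonal_of_self_adjoint _ (by ext; simp)) hy p q t ht)
      univ hv (majorizedOn_univ_of_mem_convexHull hx) (by simp)

lemma Matrix.IsHermitian.unitaryOrbitDiag_eq {A : Matrix n n ℂ} (hA : A.IsHermitian) :
    unitaryOrbitDiag A = unitaryOrbitDiag (diagonal fun j => (hA.eigenvalues j : ℂ)) := by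
  have hdiag := hA.conjStarAlgAut_star_eigenvectorUnitary
  have hA' := hA.spectral_theorem
  simp only [Unitary.conjStarAlgAut_apply, Unitary.coe_star, star_star] at hdiag hA'
  change _ = unitaryOrbitDiag (diagonal (RCLike.ofReal ∘ hA.eigenvalues))
  refine subset_antisymm ?_ ?_
  · have := unitaryOrbitDiag_conj_subset (A := diagonal (RCLike.ofReal ∘ hA.eigenvalues))
      hA.eigenvectorUnitary.2
    rwa [← hA'] at this
  · have := unitaryOrbitDiag_conj_subset (A := A) (Unitary.star_mem hA.eigenvectorUnitary.2)
    rwa [star_star, hdiag] at this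

end UnitaryOrbit

/-- **Kostant convexity theorem** for the unitary group `U(n)` (Annexe E; the
Schur–Horn form).  Coadjoint orbits of `U(n)` are the conjugation orbits
`X = {U A U*}` of a Hermitian matrix `A`; the projection `π : 𝔤* → 𝔱*` to the dual
of the Cartan subalgebra of diagonal matrices reads off the diagonal, and
`X ∩ 𝔱*` is the Weyl-group (symmetric-group) orbit of the eigenvalue vector of
`A`.  The theorem asserts `π(X) = conv (W · μ)`: the set of diagonals of the
matrices in the orbit of `A` equals the convex hull of the permutations of the
eigenvalues of `A`. -/
theorem kostant_convexity_unitaryGroup {n : ℕ}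
    (A : Matrix (Fin n) (Fin n) ℂ) (hA : A.IsHermitian) :
    {d : Fin n → ℝ | ∃ U ∈ Matrix.unitaryGroup (Fin n) ℂ,
        ∀ i : Fin n, d i = ((U * A * star U) i i).re}
      = convexHull ℝ
          {x : Fin n → ℝ | ∃ τ : Equiv.Perm (Fin n), x = hA.eigenvalues ∘ τ} :=
  hA.unitaryOrbitDiag_eq.trans (unitaryOrbitDiag_diagonal hA.eigenvalues)
end

section
/- Let β : X → Y be a continuous map of locally compact Hausdorff spaces with X σ-compact, and let ν be a positive bounded Radon measure on Y concentrated on β(X) (the complement of β(X) is locally ν-null). Then there exists a positive Radon measure μ on X with ν = β(μ) (pushforward). -/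
/-!
Cut the images `β(Kₙ)` of a compact exhaustion of `X` into disjoint Borel pieces `Bₙ ⊆ β(Kₙ)`.
Since `ν` is carried by `β(X) = ⋃ Bₙ`, it is the sum of the `ν|Bₙ`, so it suffices to lift each
`ν|Bₙ` along the restriction of `β` to the compact space `Kₙ`.

For a continuous `π : K → Y` with `K` compact and `ρ` regular and carried by `π(K)`, the functional
`g ∘ π ↦ ∫ g dρ` is well defined and positive on the subspace of `C_c(K, ℝ)` of functions
factoring through `π`, and this subspace contains the constants. The M. Riesz extension theorem
extends it to a positive functional on `C_c(K, ℝ)`; the Riesz–Markov–Kakutani measure `σ` of the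
extension satisfies `∫ g d(π₊σ) = ∫ g dρ` for all `g ∈ C_c(Y, ℝ)`, hence `π₊σ = ρ` since both
measures are regular.
-/

open MeasureTheory Set Filter CompactlySupported
open scoped ENNReal

instance CompactlySupportedContinuousMap.instPosSMulMono {α : Type*} [TopologicalSpace α] :
    PosSMulMono ℝ C_c(α, ℝ) :=
  ⟨fun _ hc _ _ hfg x ↦ mul_le_mul_of_nonneg_left (hfg x) hc⟩

def CocompactMap.ofCompactSpace {K Y : Type*} [TopologicalSpace K] [CompactSpace K]
    [TopologicalSpace Y] (π : C(K, Y)) : CocompactMap K Y :=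
  ⟨π, by simp [cocompact_eq_bot]⟩

lemma MeasureTheory.ae_of_measure_compl_range_eq_zero {K Y : Type*} [MeasurableSpace Y]
    {π : K → Y} {ρ : Measure Y} (hρ : ρ (range π)ᶜ = 0) {p : Y → Prop} (hp : ∀ x, p (π x)) :
    ∀ᵐ y ∂ρ, p y := by
  filter_upwards [measure_eq_zero_iff_ae_notMem.1 hρ] with y hy
  obtain ⟨x, rfl⟩ := not_not.1 hy
  exact hp x

namespace CompactlySupportedContinuousMap

variable {K Y : Type*} [TopologicalSpace K] [CompactSpace K] [TopologicalSpace Y]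

lemma exists_comp_ofCompactSpace_add_nonneg [T2Space Y] [LocallyCompactSpace Y] (π : C(K, Y))
    (f : C_c(K, ℝ)) : ∃ g : C_c(Y, ℝ), 0 ≤ g.comp (.ofCompactSpace π) + f := by
  obtain ⟨c, hc⟩ := (isCompact_range f.continuous).bddBelow
  obtain ⟨e, he, he_supp, -⟩ := exists_continuousMap_one_of_isCompact_subset_isOpen
    (isCompact_range π.continuous) isOpen_univ (subset_univ _)
  let E : C_c(Y, ℝ) := ⟨e, he_supp⟩
  have hE (x : K) : E (π x) = 1 := he (mem_range_self x)
  refine ⟨(-c) • E, fun x ↦ ?_⟩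
  simpa [CocompactMap.ofCompactSpace, hE] using hc ⟨x, rfl⟩

variable [MeasurableSpace Y] [OpensMeasurableSpace Y] {π : C(K, Y)} {ρ : Measure Y}
  [IsFiniteMeasureOnCompacts ρ]

lemma ker_compLinearMap_le_ker_integral (hρ : ρ (range π)ᶜ = 0) :
    LinearMap.ker (compLinearMap (R := ℝ) (δ := ℝ) (.ofCompactSpace π)) ≤
      LinearMap.ker (integralPositiveLinearMap ρ : C_c(Y, ℝ) →ₗ[ℝ] ℝ) := fun g hg ↦
  integral_eq_zero_of_ae <| ae_of_measure_compl_range_eq_zero hρ (p := (g · = 0))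
    fun x ↦ DFunLike.congr_fun hg x

/-- The functional `g ∘ π ↦ ∫ g dρ`. -/
noncomputable def integralOfCompPMap (π : C(K, Y)) (ρ : Measure Y) [IsFiniteMeasureOnCompacts ρ]
    (hρ : ρ (range π)ᶜ = 0) : C_c(K, ℝ) →ₗ.[ℝ] ℝ where
  domain := LinearMap.range (compLinearMap (R := ℝ) (δ := ℝ) (.ofCompactSpace π))
  toFun := (LinearMap.ker _).liftQ _ (ker_compLinearMap_le_ker_integral hρ) ∘ₗ
    (compLinearMap (R := ℝ) (δ := ℝ) (.ofCompactSpace π)).quotKerEquivRange.symm.toLinearMap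

lemma integralOfCompPMap_apply (hρ : ρ (range π)ᶜ = 0) {f : (integralOfCompPMap π ρ hρ).domain}
    {g : C_c(Y, ℝ)} (hfg : (f : C_c(K, ℝ)) = g.comp (.ofCompactSpace π)) :
    integralOfCompPMap π ρ hρ f = ∫ y, g y ∂ρ := by
  obtain ⟨f, hf⟩ := f
  subst hfg
  change (LinearMap.ker _).liftQ _ (ker_compLinearMap_le_ker_integral hρ)
    ((LinearMap.quotKerEquivRange _).symm ⟨_, hf⟩) = _
  exact congrArg ((LinearMap.ker _).liftQ _ (ker_compLinearMap_le_ker_integral hρ))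
    (LinearMap.quotKerEquivRange_symm_apply_image _ g hf)

lemma integralOfCompPMap_nonneg (hρ : ρ (range π)ᶜ = 0) {f : (integralOfCompPMap π ρ hρ).domain}
    (hf : 0 ≤ (f : C_c(K, ℝ))) : 0 ≤ integralOfCompPMap π ρ hρ f := by
  obtain ⟨g, hg⟩ := f.2
  rw [integralOfCompPMap_apply hρ hg.symm]
  rw [← hg] at hf
  exact integral_nonneg_of_ae (ae_of_measure_compl_range_eq_zero hρ (p := (0 ≤ g ·)) hf)

lemma exists_positiveLinearMap_comp_eq_integral [T2Space Y] [LocallyCompactSpace Y]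
    (hρ : ρ (range π)ᶜ = 0) :
    ∃ Λ : C_c(K, ℝ) →ₚ[ℝ] ℝ, ∀ g : C_c(Y, ℝ), Λ (g.comp (.ofCompactSpace π)) = ∫ y, g y ∂ρ := by
  obtain ⟨Φ, hΦ, hΦ_nonneg⟩ := riesz_extension (PointedCone.positive ℝ C_c(K, ℝ))
    (integralOfCompPMap π ρ hρ) (fun _ ↦ integralOfCompPMap_nonneg hρ) fun f ↦ by
      obtain ⟨g, hg⟩ := exists_comp_ofCompactSpace_add_nonneg π f
      exact ⟨⟨_, g, rfl⟩, hg⟩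
  exact ⟨.mk₀ Φ hΦ_nonneg, fun g ↦ (hΦ ⟨_, g, rfl⟩).trans (integralOfCompPMap_apply hρ rfl)⟩

end CompactlySupportedContinuousMap

namespace MeasureTheory.Measure

variable {Y : Type*} [TopologicalSpace Y] [T2Space Y] [LocallyCompactSpace Y] [MeasurableSpace Y]
  [BorelSpace Y]

open CompactlySupportedContinuousMap in
theorem exists_map_eq_of_compactSpace {K : Type*} [TopologicalSpace K] [CompactSpace K]
    [T2Space K] [MeasurableSpace K] [BorelSpace K] {π : K → Y} (hπ : Continuous π)
    (ρ : Measure Y) [ρ.Regular] (hρ : ρ (range π)ᶜ = 0) : ∃ σ : Measure K, σ.map π = ρ := by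
  obtain ⟨Λ, hΛ⟩ := exists_positiveLinearMap_comp_eq_integral (π := ⟨π, hπ⟩) hρ
  refine ⟨RealRMK.rieszMeasure Λ, ?_⟩
  have : ((RealRMK.rieszMeasure Λ).map π).InnerRegular := .map_of_continuous hπ
  refine ext_of_integral_eq_on_compactlySupported fun g ↦ ?_
  rw [integral_map hπ.aemeasurable (map_continuous g).aestronglyMeasurable, ← hΛ g]
  exact RealRMK.integral_rieszMeasure Λ (g.comp (.ofCompactSpace ⟨π, hπ⟩))

variable {X : Type*} [TopologicalSpace X] [T2Space X] [MeasurableSpace X] [BorelSpace X]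
  {β : X → Y} (hβ : Continuous β) (ν : Measure Y) [ν.Regular]
include hβ

theorem exists_map_eq_restrict_of_subset_image {K : Set X} (hK : IsCompact K) {B : Set Y}
    (hBK : B ⊆ β '' K) : ∃ μ : Measure X, μ.map β = ν.restrict B := by
  have : CompactSpace K := isCompact_iff_compactSpace.1 hK
  have hβK : IsCompact (β '' K) := hK.image hβ
  have : IsFiniteMeasure (ν.restrict B) :=
    isFiniteMeasure_restrict.2 ((measure_mono hBK).trans_lt hβK.measure_lt_top).ne
  have hrange : range (β ∘ Subtype.val : K → Y) = β '' K := by rw [range_comp, Subtype.range_coe]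
  obtain ⟨σ, hσ⟩ := exists_map_eq_of_compactSpace (hβ.comp continuous_subtype_val) (ν.restrict B)
    (by rw [hrange, restrict_apply hβK.isClosed.measurableSet.compl,
      (disjoint_compl_left.mono_right hBK).inter_eq, measure_empty])
  exact ⟨σ.map Subtype.val, by rw [map_map hβ.measurable measurable_subtype_coe, hσ]⟩

theorem exists_map_eq_of_measure_compl_range_eq_zero [SigmaCompactSpace X]
    (hν : ν (range β)ᶜ = 0) : ∃ μ : Measure X, μ.map β = ν := by
  set L : ℕ → Set Y := fun n ↦ β '' compactCovering X n
  have hL (n : ℕ) : MeasurableSet (L n) :=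
    ((isCompact_compactCovering X n).image hβ).isClosed.measurableSet
  choose μ hμ using fun n ↦ exists_map_eq_restrict_of_subset_image hβ ν
    (isCompact_compactCovering X n) (disjointed_subset L n)
  refine ⟨sum μ, ?_⟩
  calc (sum μ).map β = sum fun n ↦ (μ n).map β := map_sum hβ.measurable.aemeasurable
    _ = sum fun n ↦ ν.restrict (disjointed L n) := by simp only [hμ]
    _ = ν.restrict (⋃ n, disjointed L n) :=
        (restrict_iUnion (disjoint_disjointed L) (.disjointed hL)).symm
    _ = ν.restrict (range β) := by
        rw [iUnion_disjointed, ← image_iUnion, iUnion_compactCovering, image_univ]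
    _ = ν := restrict_eq_self_of_ae_mem (ae_iff.2 hν)

end MeasureTheory.Measure

theorem exists_preimage_measure_of_concentrated_general
    {X : Type*} [TopologicalSpace X] [T2Space X]
    [SigmaCompactSpace X] [MeasurableSpace X] [BorelSpace X]
    {Y : Type*} [TopologicalSpace Y] [LocallyCompactSpace Y] [T2Space Y]
    [MeasurableSpace Y] [BorelSpace Y]
    (β : X → Y) (hβ : Continuous β)
    (ν : Measure Y) [ν.Regular]
    (hconc : ∀ ε : ℝ≥0∞, 0 < ε →
      ∃ Ω : Set Y, IsOpen Ω ∧ (Set.range β)ᶜ ⊆ Ω ∧ ν Ω < ε) :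
    ∃ μ : Measure X, μ.map β = ν := by
  have hν : ν (range β)ᶜ = 0 := by
    by_contra h
    obtain ⟨Ω, -, hΩ, hΩν⟩ := hconc _ (pos_iff_ne_zero.2 h)
    exact (measure_mono hΩ).not_gt hΩν
  exact Measure.exists_map_eq_of_measure_compl_range_eq_zero hβ ν hν

/-- **Annexe A / Proposition 1.31(b).** Let `β : X → Y` be a continuous map of
locally compact Hausdorff spaces with `X` σ-compact, and let `ν` be a positive
bounded Radon measure on `Y` concentrated on `β(X)` (the complement of `β(X)` is
locally `ν`-null: open sets of arbitrarily small measure contain it).  Then there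
is a positive measure `μ` on `X` with `ν = β(μ)`. -/
theorem exists_preimage_measure_of_concentrated
    {X : Type*} [TopologicalSpace X] [LocallyCompactSpace X] [T2Space X]
    [SigmaCompactSpace X] [MeasurableSpace X] [BorelSpace X]
    {Y : Type*} [TopologicalSpace Y] [LocallyCompactSpace Y] [T2Space Y]
    [MeasurableSpace Y] [BorelSpace Y]
    (β : X → Y) (hβ : Continuous β)
    (ν : Measure Y) [IsFiniteMeasure ν] [ν.Regular]
    (hconc : ∀ ε : ℝ≥0∞, 0 < ε →
      ∃ Ω : Set Y, IsOpen Ω ∧ (Set.range β)ᶜ ⊆ Ω ∧ ν Ω < ε) :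
    ∃ μ : Measure X, μ.map β = ν :=
  exists_preimage_measure_of_concentrated_general β hβ ν hconc
end
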